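/- Let n and ε be positive real numbers and define φ : (n², ∞) → ℝ by φ(x) = x(1 − n²/x)^{2+ε}. Then for all real numbers x and s with x > n² and s ≥ x/n, (1 − x·φ'(x)/φ(x))·(s − n) + 2n ≤ −εn. -/

import Mathlib

open Filter Topology

/- With `φ(x) = x (1 − a/x)^p` one has `1 − x φ'(x)/φ(x) = −p a/(x − a)`; for `a = n²` and
`s − n ≥ (x − n²)/n` the reaction term is then at most `−(2 + ε) n + 2 n = −ε n`. -/

lemma hasDerivAt_one_sub_div {a x : ℝ} (hx : x ≠ 0) :
    HasDerivAt (fun y : ℝ => 1 - a / y) (a / x ^ 2) x := by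
  simp only [div_eq_mul_inv]
  exact (((hasDerivAt_inv hx).const_mul a).const_sub 1).congr_deriv (by ring)

lemma hasDerivAt_mul_one_sub_div_rpow {a p x : ℝ} (hx : 0 < x) (hax : a < x) :
    HasDerivAt (fun y : ℝ => y * (1 - a / y) ^ p)
      ((1 - a / x) ^ p + x * (a / x ^ 2 * p * (1 - a / x) ^ (p - 1))) x := by
  have hc : 0 < 1 - a / x := by rwa [sub_pos, div_lt_one hx]
  simpa using
    (hasDerivAt_id' x).fun_mul ((hasDerivAt_one_sub_div hx.ne').rpow_const (Or.inl hc.ne'))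

lemma one_sub_mul_deriv_div_mul_one_sub_div_rpow {a p x : ℝ} (hx : 0 < x) (hax : a < x) :
    1 - x * deriv (fun y : ℝ => y * (1 - a / y) ^ p) x / (x * (1 - a / x) ^ p) =
      -(p * a / (x - a)) := by
  have hc : 0 < 1 - a / x := by rwa [sub_pos, div_lt_one hx]
  have hxa : 0 < x - a := sub_pos.mpr hax
  have hsplit : (1 - a / x) ^ p = (1 - a / x) * (1 - a / x) ^ (p - 1) := by
    simpa only [Real.rpow_one, add_sub_cancel] using Real.rpow_add hc 1 (p - 1)
  have hq : 0 < (1 - a / x) ^ (p - 1) := Real.rpow_pos_of_pos hc _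
  rw [(hasDerivAt_mul_one_sub_div_rpow hx hax).deriv, hsplit]
  field_simp
  ring

lemma neg_div_mul_sub_le {n p x s : ℝ} (hn : 0 < n) (hp : 0 ≤ p) (hx : n ^ 2 < x)
    (hs : x / n ≤ s) : -(p * n ^ 2 / (x - n ^ 2)) * (s - n) ≤ -(p * n) := by
  have hxn : 0 < x - n ^ 2 := sub_pos.mpr hx
  have hsn : (x - n ^ 2) / n ≤ s - n := by
    calc (x - n ^ 2) / n = x / n - n := by field_simp
      _ ≤ s - n := by linarith
  calc -(p * n ^ 2 / (x - n ^ 2)) * (s - n)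
      ≤ -(p * n ^ 2 / (x - n ^ 2)) * ((x - n ^ 2) / n) :=
        mul_le_mul_of_nonpos_left hsn (neg_nonpos.mpr (by positivity))
    _ = -(p * n) := by field_simp

/-- Reaction-term estimate in hyperbolic space: for `φ(x) = x (1 − n²/x)^{2+ε}`,
`x > n²` and `s ≥ x/n` imply `(1 − x φ'(x)/φ(x))(s − n) + 2n ≤ −εn`. -/
theorem stmt_18 (n ε : ℝ) (hn : 0 < n) (hε : 0 < ε)
    (φ : ℝ → ℝ)
    (hφ : ∀ x : ℝ, n ^ 2 < x → φ x = x * (1 - n ^ 2 / x) ^ (2 + ε)) :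
    ∀ x s : ℝ, n ^ 2 < x → x / n ≤ s →
      (1 - x * deriv φ x / φ x) * (s - n) + 2 * n ≤ -(ε * n) := by
  intro x s hx hs
  have hx0 : 0 < x := (pow_pos hn 2).trans hx
  have hφ_nhds : φ =ᶠ[𝓝 x] fun y => y * (1 - n ^ 2 / y) ^ (2 + ε) :=
    (eventually_gt_nhds hx).mono hφ
  rw [hφ_nhds.deriv_eq, hφ x hx, one_sub_mul_deriv_div_mul_one_sub_div_rpow hx0 hx]
  linarith [neg_div_mul_sub_le hn (by positivity : (0 : ℝ) ≤ 2 + ε) hx hs]
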